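/- Let (x1,x2) and (y1,y2) be vertices of the minimal-rank-preserving direct product H = H1×̌H2 of finite hypergraphs. Then d_H((x1,x2),(y1,y2)) = min{ n ∈ ℕ : for i=1,2 the factor H_i has a walk of length n from x_i to y_i }, and d_H((x1,x2),(y1,y2)) = ∞ if no such n exists. -/

import Mathlib

/-!
Basic definitions: finite hypergraphs (a finite nonempty vertex set `V`, given by
`[Fintype V] [Nonempty V]`, together with a set of nonempty edges), walks, distance,
connectedness, simplicity, rank, colorings, Helly property, covers,
the various hypergraph products, 2-sections, and graph products.
-/

/-- A hypergraph on a vertex type `V`: a collection of nonempty edges (finite subsets of `V`). -/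
structure FinHypergraph (V : Type*) where
  edges : Set (Finset V)
  nonempty_edges : ∀ e ∈ edges, e.Nonempty

namespace FinHypergraph

variable {V V₁ V₂ : Type*}

/-- There is a walk of length `n` from `u` to `v`: a sequence of vertices `w 0, …, w n`
and edges `f 1, …, f n` with consecutive vertices distinct and both contained
in the corresponding edge. -/
def HasWalk (H : FinHypergraph V) (u v : V) (n : ℕ) : Prop :=
  ∃ (w : Fin (n + 1) → V) (f : Fin n → Finset V),
    w 0 = u ∧ w (Fin.last n) = v ∧
      ∀ i : Fin n, f i ∈ H.edges ∧ w i.castSucc ≠ w i.succ ∧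
        w i.castSucc ∈ f i ∧ w i.succ ∈ f i

/-- The distance between two vertices: the minimum length of a walk joining them,
`⊤ = ∞` if there is none. -/
noncomputable def dist (H : FinHypergraph V) (u v : V) : ℕ∞ :=
  sInf {x : ℕ∞ | ∃ n : ℕ, x = n ∧ H.HasWalk u v n}

/-- A hypergraph is connected if any two vertices are joined by a walk. -/
def Connected (H : FinHypergraph V) : Prop := ∀ u v : V, ∃ n, H.HasWalk u v n

/-- A hypergraph is simple if every edge has at least two vertices and
no edge is contained in another edge. -/
def Simple (H : FinHypergraph V) : Prop :=
  (∀ e ∈ H.edges, 2 ≤ e.card) ∧ ∀ e ∈ H.edges, ∀ f ∈ H.edges, e ⊆ f → e = f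

/-- A hypergraph is loopless if every edge has at least two vertices. -/
def Loopless (H : FinHypergraph V) : Prop := ∀ e ∈ H.edges, 2 ≤ e.card

/-- The rank: the maximum cardinality of an edge. -/
noncomputable def rank (H : FinHypergraph V) : ℕ := sSup (Finset.card '' H.edges)

/-- The anti-rank: the minimum cardinality of an edge. -/
noncomputable def antirank (H : FinHypergraph V) : ℕ := sInf (Finset.card '' H.edges)

/-- A proper coloring: no color class contains an edge. -/
def IsProperColoring (H : FinHypergraph V) {k : ℕ} (c : V → Fin k) : Prop :=
  ∀ e ∈ H.edges, ∀ i : Fin k, ¬ ∀ v ∈ e, c v = i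

/-- A proper strong coloring: a proper coloring in which the vertices of every
edge receive pairwise distinct colors. -/
def IsStrongColoring (H : FinHypergraph V) {k : ℕ} (c : V → Fin k) : Prop :=
  H.IsProperColoring c ∧ ∀ e ∈ H.edges, ∀ u ∈ e, ∀ v ∈ e, u ≠ v → c u ≠ c v

/-- The chromatic number: the least `k` admitting a proper `k`-coloring. -/
noncomputable def chromaticNumber (H : FinHypergraph V) : ℕ :=
  sInf {k : ℕ | ∃ c : V → Fin k, H.IsProperColoring c}

/-- The strong chromatic number: the least `k` admitting a proper strong `k`-coloring. -/
noncomputable def strongChromaticNumber (H : FinHypergraph V) : ℕ :=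
  sInf {k : ℕ | ∃ c : V → Fin k, H.IsStrongColoring c}

/-- The Helly property: every intersecting family of edges is a star. -/
def Helly (H : FinHypergraph V) : Prop :=
  ∀ E' ⊆ H.edges, (∀ e ∈ E', ∀ f ∈ E', ∃ x, x ∈ e ∧ x ∈ f) → ∃ v, ∀ e ∈ E', v ∈ e

/-- The covering number: the minimum cardinality of a set of vertices meeting every edge. -/
noncomputable def coverNumber (H : FinHypergraph V) : ℕ :=
  sInf {k : ℕ | ∃ T : Finset V, T.card = k ∧ ∀ e ∈ H.edges, ∃ v ∈ T, v ∈ e}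

/-- The Cartesian product of hypergraphs. -/
def cartProd (H₁ : FinHypergraph V₁) (H₂ : FinHypergraph V₂) : FinHypergraph (V₁ × V₂) where
  edges := {E | (∃ x, ∃ f ∈ H₂.edges, E = {x} ×ˢ f) ∨ ∃ e ∈ H₁.edges, ∃ y, E = e ×ˢ {y}}
  nonempty_edges := by
    rintro E (⟨x, f, hf, rfl⟩ | ⟨e, he, y, rfl⟩)
    · exact (Finset.singleton_nonempty x).product (H₂.nonempty_edges f hf)
    · exact (H₁.nonempty_edges e he).product (Finset.singleton_nonempty y)

section Products

variable [DecidableEq V₁] [DecidableEq V₂]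

/-- The minimal-rank-preserving direct product `H₁ ×̌ H₂`. -/
def minDirProd (H₁ : FinHypergraph V₁) (H₂ : FinHypergraph V₂) : FinHypergraph (V₁ × V₂) where
  edges := {E | ∃ e₁ ∈ H₁.edges, ∃ e₂ ∈ H₂.edges,
    E ⊆ e₁ ×ˢ e₂ ∧ E.card = min e₁.card e₂.card ∧
      (E.image Prod.fst).card = min e₁.card e₂.card ∧
      (E.image Prod.snd).card = min e₁.card e₂.card}
  nonempty_edges := by
    rintro E ⟨e₁, h₁, e₂, h₂, -, hc, -, -⟩
    rw [← Finset.card_pos, hc]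
    exact lt_min (Finset.card_pos.mpr (H₁.nonempty_edges e₁ h₁))
      (Finset.card_pos.mpr (H₂.nonempty_edges e₂ h₂))

/-- The maximal-rank-preserving direct product `H₁ ×̂ H₂`. -/
def maxDirProd (H₁ : FinHypergraph V₁) (H₂ : FinHypergraph V₂) : FinHypergraph (V₁ × V₂) where
  edges := {E | ∃ e₁ ∈ H₁.edges, ∃ e₂ ∈ H₂.edges,
    E ⊆ e₁ ×ˢ e₂ ∧ E.card = max e₁.card e₂.card ∧
      E.image Prod.fst = e₁ ∧ E.image Prod.snd = e₂}
  nonempty_edges := by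
    rintro E ⟨e₁, h₁, e₂, h₂, -, hc, -, -⟩
    rw [← Finset.card_pos, hc]
    exact lt_max_iff.mpr (Or.inl (Finset.card_pos.mpr (H₁.nonempty_edges e₁ h₁)))

/-- The non-rank-preserving direct product `H₁ ×̃ H₂`. -/
def nrDirProd (H₁ : FinHypergraph V₁) (H₂ : FinHypergraph V₂) : FinHypergraph (V₁ × V₂) where
  edges := {E | ∃ e ∈ H₁.edges, ∃ f ∈ H₂.edges, ∃ x ∈ e, ∃ y ∈ f,
    E = insert (x, y) ((e.erase x) ×ˢ (f.erase y))}
  nonempty_edges := by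
    rintro E ⟨e, -, f, -, x, -, y, -, rfl⟩
    exact Finset.insert_nonempty _ _

/-- The normal product `H₁ ⊠̌ H₂`: union of the Cartesian product edges and the
minimal-rank-preserving direct product edges. -/
def normalProd (H₁ : FinHypergraph V₁) (H₂ : FinHypergraph V₂) : FinHypergraph (V₁ × V₂) where
  edges := (H₁.cartProd H₂).edges ∪ (H₁.minDirProd H₂).edges
  nonempty_edges := by
    rintro E (h | h)
    · exact (H₁.cartProd H₂).nonempty_edges E h
    · exact (H₁.minDirProd H₂).nonempty_edges E h

/-- The strong product `H₁ ⊠̂ H₂`: union of the Cartesian product edges and the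
maximal-rank-preserving direct product edges. -/
def strongProd (H₁ : FinHypergraph V₁) (H₂ : FinHypergraph V₂) : FinHypergraph (V₁ × V₂) where
  edges := (H₁.cartProd H₂).edges ∪ (H₁.maxDirProd H₂).edges
  nonempty_edges := by
    rintro E (h | h)
    · exact (H₁.cartProd H₂).nonempty_edges E h
    · exact (H₁.maxDirProd H₂).nonempty_edges E h

/-- The lexicographic product `H₁ ∘ H₂`. -/
def lexProd (H₁ : FinHypergraph V₁) (H₂ : FinHypergraph V₂) : FinHypergraph (V₁ × V₂) where
  edges := {E | (E.image Prod.fst ∈ H₁.edges ∧ (E.image Prod.fst).card = E.card) ∨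
    ∃ x, ∃ e₂ ∈ H₂.edges, E = {x} ×ˢ e₂}
  nonempty_edges := by
    rintro E (⟨h₁, hc⟩ | ⟨x, e₂, h₂, rfl⟩)
    · rw [← Finset.card_pos, ← hc]
      exact Finset.card_pos.mpr (H₁.nonempty_edges _ h₁)
    · exact (Finset.singleton_nonempty x).product (H₂.nonempty_edges e₂ h₂)

end Products

/-- The square product `H₁ ■ H₂`. -/
def squareProd (H₁ : FinHypergraph V₁) (H₂ : FinHypergraph V₂) : FinHypergraph (V₁ × V₂) where
  edges := {E | ∃ e₁ ∈ H₁.edges, ∃ e₂ ∈ H₂.edges, E = e₁ ×ˢ e₂}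
  nonempty_edges := by
    rintro E ⟨e₁, h₁, e₂, h₂, rfl⟩
    exact (H₁.nonempty_edges e₁ h₁).product (H₂.nonempty_edges e₂ h₂)

/-- The 2-section of a hypergraph: distinct vertices are adjacent iff they lie
in a common edge. -/
def twoSection (H : FinHypergraph V) : SimpleGraph V where
  Adj x y := x ≠ y ∧ ∃ e ∈ H.edges, x ∈ e ∧ y ∈ e
  symm := by constructor; rintro x y ⟨hxy, e, he, hx, hy⟩; exact ⟨hxy.symm, e, he, hy, hx⟩
  loopless := by constructor; rintro x ⟨hx, -⟩; exact hx rfl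

end FinHypergraph

namespace SimpleGraph

variable {V₁ V₂ : Type*}

/-- The direct (tensor) product of simple graphs. -/
def directProd (G₁ : SimpleGraph V₁) (G₂ : SimpleGraph V₂) : SimpleGraph (V₁ × V₂) where
  Adj x y := G₁.Adj x.1 y.1 ∧ G₂.Adj x.2 y.2
  symm := ⟨fun _ _ ⟨h₁, h₂⟩ => ⟨h₁.symm, h₂.symm⟩⟩
  loopless := ⟨fun x h => G₁.loopless.irrefl x.1 h.1⟩

/-- The strong product of simple graphs. -/
def strongGraphProd (G₁ : SimpleGraph V₁) (G₂ : SimpleGraph V₂) : SimpleGraph (V₁ × V₂) where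
  Adj x y := x ≠ y ∧ ((x.1 = y.1 ∧ G₂.Adj x.2 y.2) ∨ (x.2 = y.2 ∧ G₁.Adj x.1 y.1) ∨
    (G₁.Adj x.1 y.1 ∧ G₂.Adj x.2 y.2))
  symm := by
    constructor
    rintro x y ⟨hne, (⟨h, h'⟩ | ⟨h, h'⟩ | ⟨h, h'⟩)⟩
    · exact ⟨hne.symm, Or.inl ⟨h.symm, h'.symm⟩⟩
    · exact ⟨hne.symm, Or.inr (Or.inl ⟨h.symm, h'.symm⟩)⟩
    · exact ⟨hne.symm, Or.inr (Or.inr ⟨h.symm, h'.symm⟩)⟩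
  loopless := by constructor; rintro x ⟨hx, -⟩; exact hx rfl

/-- The lexicographic product of simple graphs. -/
def lexGraphProd (G₁ : SimpleGraph V₁) (G₂ : SimpleGraph V₂) : SimpleGraph (V₁ × V₂) where
  Adj x y := G₁.Adj x.1 y.1 ∨ (x.1 = y.1 ∧ G₂.Adj x.2 y.2)
  symm := by
    constructor
    rintro x y (h | ⟨h, h'⟩)
    · exact Or.inl h.symm
    · exact Or.inr ⟨h.symm, h'.symm⟩
  loopless := by
    constructor
    rintro x (h | ⟨-, h⟩)
    · exact G₁.loopless.irrefl x.1 h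
    · exact G₂.loopless.irrefl x.2 h

end SimpleGraph

/- A walk in `H₁ ×̌ H₂` projects to walks of the same length in both factors because the
projections are injective on every edge. Conversely, two steps `a₁ → b₁` in `e₁` and
`a₂ → b₂` in `e₂` lift to one step `(a₁, a₂) → (b₁, b₂)`: extend the partial matchings
`a₁ ↦ i, b₁ ↦ j` and `a₂ ↦ i, b₂ ↦ j` to injections of `Fin (min #e₁ #e₂)` into `e₁` and
`e₂`; the points `(f k, g k)` form an edge of the product containing both pairs. -/

open Finset Function

theorem Set.InjOn.exists_injective_mapsTo_extend {ι β : Type*} [Fintype ι] {t : Finset β}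
    (hcard : Fintype.card ι ≤ #t) {s : Set ι} {f : ι → β} (hfst : s.MapsTo f t)
    (hfs : s.InjOn f) : ∃ g : ι → β, Injective g ∧ (∀ i, g i ∈ t) ∧ s.EqOn g f := by
  classical
  have himage : s.toFinset.image f ⊆ t := by
    intro y hy
    obtain ⟨i, hi, rfl⟩ := Finset.mem_image.mp hy
    exact hfst (Set.mem_toFinset.mp hi)
  have himage_card : #(s.toFinset.image f) ≤ Fintype.card ι := card_image_le.trans (card_le_univ _)
  obtain ⟨u, hsu, hut, hu⟩ := Finset.exists_subsuperset_card_eq himage himage_card hcard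
  obtain ⟨e, he⟩ := Set.MapsTo.exists_equiv_extend_of_card_eq (t := u) hu.symm
    (fun i hi => hsu (Finset.mem_image_of_mem f (Set.mem_toFinset.mpr hi))) hfs
  exact ⟨fun i => e i, Subtype.val_injective.comp e.injective, fun i => hut (e i).2, he⟩

theorem Finset.exists_injective_forall_mem_with_pair {ι β : Type*} [Fintype ι] {i j : ι}
    (hij : i ≠ j) {t : Finset β} {a b : β} (ha : a ∈ t) (hb : b ∈ t) (hab : a ≠ b)
    (hcard : Fintype.card ι ≤ #t) :
    ∃ f : ι → β, Injective f ∧ (∀ k, f k ∈ t) ∧ f i = a ∧ f j = b := by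
  classical
  obtain ⟨f, hf, hft, hfij⟩ := Set.InjOn.exists_injective_mapsTo_extend
    (s := {i, j}) (f := fun k => if k = i then a else b) hcard
    (by rintro k (rfl | rfl) <;> simp [ha, hb, hij.symm])
    (by simp [Set.InjOn, hij, hij.symm, hab, hab.symm])
  exact ⟨f, hf, hft, by simpa using hfij (by simp : i ∈ _),
    by simpa [hij.symm] using hfij (by simp : j ∈ _)⟩

namespace FinHypergraph

variable {V W V₁ V₂ : Type*}

theorem HasWalk.map {H : FinHypergraph V} {H' : FinHypergraph W} (φ : V → W)
    (hφ : ∀ e ∈ H.edges, ∃ e' ∈ H'.edges, Set.MapsTo φ e e' ∧ Set.InjOn φ e)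
    {u v : V} {n : ℕ} (h : H.HasWalk u v n) : H'.HasWalk (φ u) (φ v) n := by
  obtain ⟨w, f, rfl, rfl, hf⟩ := h
  choose e' he' hmaps hinj using fun i => hφ (f i) (hf i).1
  refine ⟨φ ∘ w, e', rfl, rfl, fun i => ⟨he' i, ?_, hmaps i (hf i).2.2.1, hmaps i (hf i).2.2.2⟩⟩
  exact fun h => (hf i).2.1 (hinj i (hf i).2.2.1 (hf i).2.2.2 h)

variable [DecidableEq V₁] [DecidableEq V₂] {H₁ : FinHypergraph V₁} {H₂ : FinHypergraph V₂}

theorem exists_mapsTo_injOn_fst_of_mem_minDirProd {E : Finset (V₁ × V₂)}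
    (hE : E ∈ (H₁.minDirProd H₂).edges) :
    ∃ e₁ ∈ H₁.edges,
      Set.MapsTo Prod.fst (E : Set (V₁ × V₂)) e₁ ∧ Set.InjOn Prod.fst (E : Set (V₁ × V₂)) := by
  obtain ⟨e₁, he₁, _, _, hsub, hcard, hfst, -⟩ := hE
  exact ⟨e₁, he₁, fun p hp => (mem_product.mp (hsub hp)).1,
    card_image_iff.mp (hfst.trans hcard.symm)⟩

theorem exists_mapsTo_injOn_snd_of_mem_minDirProd {E : Finset (V₁ × V₂)}
    (hE : E ∈ (H₁.minDirProd H₂).edges) :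
    ∃ e₂ ∈ H₂.edges,
      Set.MapsTo Prod.snd (E : Set (V₁ × V₂)) e₂ ∧ Set.InjOn Prod.snd (E : Set (V₁ × V₂)) := by
  obtain ⟨_, _, e₂, he₂, hsub, hcard, -, hsnd⟩ := hE
  exact ⟨e₂, he₂, fun p hp => (mem_product.mp (hsub hp)).2,
    card_image_iff.mp (hsnd.trans hcard.symm)⟩

theorem image_mem_minDirProd_edges {ι : Type*} [Fintype ι] {e₁ : Finset V₁} {e₂ : Finset V₂}
    (he₁ : e₁ ∈ H₁.edges) (he₂ : e₂ ∈ H₂.edges) (hι : Fintype.card ι = min #e₁ #e₂)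
    {f : ι → V₁} {g : ι → V₂} (hf : Injective f) (hg : Injective g)
    (hfe : ∀ i, f i ∈ e₁) (hge : ∀ i, g i ∈ e₂) :
    univ.image (fun i => (f i, g i)) ∈ (H₁.minDirProd H₂).edges := by
  have hfg : Injective fun i => (f i, g i) := fun i j h => hf (congrArg Prod.fst h)
  refine ⟨e₁, he₁, e₂, he₂, ?_, ?_, ?_, ?_⟩
  · simpa [subset_iff] using fun i => And.intro (hfe i) (hge i)
  · rw [card_image_of_injective _ hfg, card_univ, hι]
  · simpa [image_image, comp_def, card_image_of_injective _ hf] using hι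
  · simpa [image_image, comp_def, card_image_of_injective _ hg] using hι

theorem exists_mem_minDirProd_edges {e₁ : Finset V₁} {e₂ : Finset V₂}
    (he₁ : e₁ ∈ H₁.edges) (he₂ : e₂ ∈ H₂.edges) {a₁ b₁ : V₁} {a₂ b₂ : V₂}
    (ha₁ : a₁ ∈ e₁) (hb₁ : b₁ ∈ e₁) (ha₂ : a₂ ∈ e₂) (hb₂ : b₂ ∈ e₂)
    (hab₁ : a₁ ≠ b₁) (hab₂ : a₂ ≠ b₂) :
    ∃ E ∈ (H₁.minDirProd H₂).edges, (a₁, a₂) ∈ E ∧ (b₁, b₂) ∈ E := by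
  set m := min #e₁ #e₂
  have hm : 1 < m := lt_min (one_lt_card.mpr ⟨a₁, ha₁, b₁, hb₁, hab₁⟩)
    (one_lt_card.mpr ⟨a₂, ha₂, b₂, hb₂, hab₂⟩)
  obtain ⟨i, j, hij⟩ := Fintype.exists_pair_of_one_lt_card (α := Fin m) (by simpa using hm)
  obtain ⟨f, hf, hfe, hfi, hfj⟩ :=
    exists_injective_forall_mem_with_pair hij ha₁ hb₁ hab₁ (by simp [m])
  obtain ⟨g, hg, hge, hgi, hgj⟩ :=
    exists_injective_forall_mem_with_pair hij ha₂ hb₂ hab₂ (by simp [m])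
  refine ⟨_, image_mem_minDirProd_edges he₁ he₂ (Fintype.card_fin m) hf hg hfe hge, ?_, ?_⟩
  · exact mem_image.mpr ⟨i, mem_univ _, by rw [hfi, hgi]⟩
  · exact mem_image.mpr ⟨j, mem_univ _, by rw [hfj, hgj]⟩

theorem HasWalk.minDirProd {x₁ y₁ : V₁} {x₂ y₂ : V₂} {n : ℕ} (h₁ : H₁.HasWalk x₁ y₁ n)
    (h₂ : H₂.HasWalk x₂ y₂ n) : (H₁.minDirProd H₂).HasWalk (x₁, x₂) (y₁, y₂) n := by
  obtain ⟨w₁, f₁, rfl, rfl, hf₁⟩ := h₁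
  obtain ⟨w₂, f₂, rfl, rfl, hf₂⟩ := h₂
  choose E hE hEa hEb using fun i => exists_mem_minDirProd_edges (hf₁ i).1 (hf₂ i).1
    (hf₁ i).2.2.1 (hf₁ i).2.2.2 (hf₂ i).2.2.1 (hf₂ i).2.2.2 (hf₁ i).2.1 (hf₂ i).2.1
  exact ⟨fun k => (w₁ k, w₂ k), E, rfl, rfl,
    fun i => ⟨hE i, fun h => (hf₁ i).2.1 (congrArg Prod.fst h), hEa i, hEb i⟩⟩

theorem hasWalk_minDirProd_iff {x₁ y₁ : V₁} {x₂ y₂ : V₂} {n : ℕ} :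
    (H₁.minDirProd H₂).HasWalk (x₁, x₂) (y₁, y₂) n ↔
      H₁.HasWalk x₁ y₁ n ∧ H₂.HasWalk x₂ y₂ n :=
  ⟨fun h => ⟨h.map Prod.fst fun _ => exists_mapsTo_injOn_fst_of_mem_minDirProd,
    h.map Prod.snd fun _ => exists_mapsTo_injOn_snd_of_mem_minDirProd⟩,
    fun h => h.1.minDirProd h.2⟩

end FinHypergraph

theorem dist_minDirProd_general {V₁ V₂ : Type*} [DecidableEq V₁] [DecidableEq V₂]
    (H₁ : FinHypergraph V₁) (H₂ : FinHypergraph V₂)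
    (x₁ y₁ : V₁) (x₂ y₂ : V₂) :
    (H₁.minDirProd H₂).dist (x₁, x₂) (y₁, y₂) =
      sInf {x : ℕ∞ | ∃ n : ℕ, x = n ∧ H₁.HasWalk x₁ y₁ n ∧ H₂.HasWalk x₂ y₂ n} := by
  simp only [FinHypergraph.dist, FinHypergraph.hasWalk_minDirProd_iff]

/-- distance formula for the minimal-rank-preserving direct product:
the distance is the least `n` such that both factors have a walk of length `n`
between the corresponding coordinates (`∞` if there is no such `n`). -/
theorem dist_minDirProd {V₁ V₂ : Type*} [Fintype V₁] [Nonempty V₁] [DecidableEq V₁]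
    [Fintype V₂] [Nonempty V₂] [DecidableEq V₂] (H₁ : FinHypergraph V₁) (H₂ : FinHypergraph V₂)
    (x₁ y₁ : V₁) (x₂ y₂ : V₂) :
    (H₁.minDirProd H₂).dist (x₁, x₂) (y₁, y₂) =
      sInf {x : ℕ∞ | ∃ n : ℕ, x = n ∧ H₁.HasWalk x₁ y₁ n ∧ H₂.HasWalk x₂ y₂ n} :=
  dist_minDirProd_general H₁ H₂ x₁ y₁ x₂ y₂
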